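/- arXiv:1505.01175 — 3 statements merged into one kernel-verified Lean document; each statement's English description precedes it below -/
import Mathlib

section
/- Let G be a group and let f : G → ℂ be a polynomial of degree at most k, i.e. all (k+1)-fold left derivatives of f vanish. If c ∈ G has finite order, then ∂_c f = 0; that is, f(c g) = f(g) for all g ∈ G. -/
/-- Left derivative: `∂_u f (g) = f (u g) - f g`. -/
def lderiv {G : Type*} [Group G] (u : G) (f : G → ℂ) : G → ℂ := fun g => f (u * g) - f g

/-- `f ∈ P^k(G)`: all `(k+1)`-fold left derivatives of `f` vanish identically. -/
def IsPolyOfDeg {G : Type*} [Group G] (k : ℕ) (f : G → ℂ) : Prop :=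
  ∀ us : List G, us.length = k + 1 → us.foldr lderiv f = 0

lemma foldr_replicate_lderiv {G : Type*} [Group G] (c : G) (f : G → ℂ) (n : ℕ) :
    (List.replicate n c).foldr lderiv f = (lderiv c)^[n] f := by
  induction n with
  | zero => rfl
  | succ n ih => simp [List.replicate_succ, ih, Function.iterate_succ_apply']

lemma key_lemma {G : Type*} [Group G] (c : G) (m : ℕ) (hm : 0 < m) (hcm : c ^ m = 1) :
    ∀ (k : ℕ) (f : G → ℂ), (lderiv c)^[k + 1] f = 0 → lderiv c f = 0 := by
  intro k
  induction k with
  | zero => intro f h; simpa using h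
  | succ k ih =>
    intro f h
    have hDf : (lderiv c)^[k + 1] (lderiv c f) = 0 := by
      rw [← Function.iterate_succ_apply]; exact h
    have hinv : ∀ g : G, lderiv c f (c * g) = lderiv c f g := by
      intro g
      have := congrFun (ih (lderiv c f) hDf) g
      simp only [lderiv, Pi.zero_apply] at this
      exact sub_eq_zero.mp this
    funext g
    have horbit : ∀ i : ℕ, lderiv c f (c ^ i * g) = lderiv c f g := by
      intro i
      induction i with
      | zero => simp
      | succ i ihi =>
        rw [pow_succ', mul_assoc, hinv, ihi]
    have htel : ∀ n : ℕ, f (c ^ n * g) - f g = ∑ i ∈ Finset.range n, lderiv c f (c ^ i * g) := by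
      intro n
      induction n with
      | zero => simp
      | succ n ihn =>
        rw [Finset.sum_range_succ, ← ihn]
        simp only [lderiv]
        rw [pow_succ', mul_assoc]
        ring
    have := htel m
    rw [hcm, one_mul, sub_self] at this
    have hsum : (0 : ℂ) = (m : ℂ) * lderiv c f g := by
      rw [this]
      simp [horbit, Finset.sum_const]
    have hm' : (m : ℂ) ≠ 0 := Nat.cast_ne_zero.mpr hm.ne'
    have : lderiv c f g = 0 := by
      rcases mul_eq_zero.mp hsum.symm with h' | h'
      · exact absurd h' hm'
      · exact h'
    simpa using this

/-- If `f` is a polynomial of degree at most `k` and `c` has finite order then `∂_c f = 0`,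
i.e. `f (c g) = f g` for all `g`. -/
theorem lderiv_eq_zero_of_finOrder {G : Type*} [Group G] {k : ℕ} {f : G → ℂ}
    (hf : IsPolyOfDeg k f) {c : G} (hc : IsOfFinOrder c) :
    ∀ g : G, f (c * g) = f g := by
  intro g
  have h0 : (lderiv c)^[k + 1] f = 0 := by
    rw [← foldr_replicate_lderiv]
    exact hf _ List.length_replicate
  have := congrFun (key_lemma c (orderOf c) hc.orderOf_pos (pow_orderOf_eq_one c) k f h0) g
  simp only [lderiv, Pi.zero_apply, sub_eq_zero] at this
  exact this
end

section
/- Let G be a group with lower central series G_1 = G, G_{i+1} = [G, G_i], and for f : G → ℂ let P^k(G) denote functions all of whose (k+1)-fold left derivatives vanish. If f ∈ P^k(G), then f factors through G/G_{k+1}; that is, f(ng) = f(g) for all n ∈ G_{k+1} and g ∈ G. -/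
namespace PolyAux

variable {G : Type*} [Group G]

open scoped commutatorElement

/-- `Q d f`: all `d`-fold left derivatives of `f` vanish. -/
def Q (d : ℕ) (f : G → ℂ) : Prop :=
  ∀ us : List G, us.length = d → us.foldr lderiv f = 0

lemma lderiv_zero (u : G) : lderiv u (0 : G → ℂ) = 0 := by
  funext g; simp [lderiv]

lemma lderiv_add (u : G) (f g : G → ℂ) :
    lderiv u (f + g) = lderiv u f + lderiv u g := by
  funext x; simp [lderiv]; ring

lemma lderiv_sub (u : G) (f g : G → ℂ) :
    lderiv u (f - g) = lderiv u f - lderiv u g := by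
  funext x; simp [lderiv]; ring

lemma lderiv_neg (u : G) (f : G → ℂ) : lderiv u (-f) = -(lderiv u f) := by
  funext x; simp [lderiv]; ring

lemma foldr_zero (us : List G) : us.foldr lderiv (0 : G → ℂ) = 0 := by
  induction us with
  | nil => rfl
  | cons u us ih => simp [List.foldr, ih, lderiv_zero]

lemma foldr_add (us : List G) (f g : G → ℂ) :
    us.foldr lderiv (f + g) = us.foldr lderiv f + us.foldr lderiv g := by
  induction us with
  | nil => rfl
  | cons u us ih => simp [List.foldr, ih, lderiv_add]

lemma foldr_sub (us : List G) (f g : G → ℂ) :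
    us.foldr lderiv (f - g) = us.foldr lderiv f - us.foldr lderiv g := by
  induction us with
  | nil => rfl
  | cons u us ih => simp [List.foldr, ih, lderiv_sub]

lemma foldr_neg (us : List G) (f : G → ℂ) :
    us.foldr lderiv (-f) = -(us.foldr lderiv f) := by
  induction us with
  | nil => rfl
  | cons u us ih => simp [List.foldr, ih, lderiv_neg]

lemma Q_zero (d : ℕ) : Q d (0 : G → ℂ) := fun us _ => foldr_zero us

lemma Q_add {d : ℕ} {f g : G → ℂ} (hf : Q d f) (hg : Q d g) : Q d (f + g) := by
  intro us h; rw [foldr_add, hf us h, hg us h, add_zero]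

lemma Q_sub {d : ℕ} {f g : G → ℂ} (hf : Q d f) (hg : Q d g) : Q d (f - g) := by
  intro us h; rw [foldr_sub, hf us h, hg us h, sub_zero]

lemma Q_neg {d : ℕ} {f : G → ℂ} (hf : Q d f) : Q d (-f) := by
  intro us h; rw [foldr_neg, hf us h, neg_zero]

/-- Monotonicity. -/
lemma Q_succ {d : ℕ} {f : G → ℂ} (hf : Q d f) : Q (d + 1) f := by
  intro us h
  cases us with
  | nil => simp at h
  | cons u us =>
    simp only [List.length_cons, Nat.add_right_cancel_iff] at h
    simp [List.foldr, hf us h, lderiv_zero]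

/-- A derivative drops the degree by one. -/
lemma Q_lderiv_of_succ {d : ℕ} {f : G → ℂ} (hf : Q (d + 1) f) (u : G) :
    Q d (lderiv u f) := by
  intro us h
  have := hf (us ++ [u]) (by simp [h])
  rwa [List.foldr_append] at this

/-- Derivatives preserve `Q d`. -/
lemma Q_lderiv {d : ℕ} {f : G → ℂ} (hf : Q d f) (u : G) : Q d (lderiv u f) :=
  Q_lderiv_of_succ (Q_succ hf) u

/-- Left translation preserves `Q d`. -/
lemma Q_transl {d : ℕ} {f : G → ℂ} (hf : Q d f) (a : G) :
    Q d (fun g => f (a * g)) := by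
  have h : (fun g => f (a * g)) = f + lderiv a f := by
    funext g; simp [lderiv]
  rw [h]
  exact Q_add hf (Q_lderiv hf a)

lemma lderiv_one (f : G → ℂ) : lderiv (1 : G) f = 0 := by
  funext g; simp [lderiv]

lemma lderiv_mul (a b : G) (f : G → ℂ) :
    lderiv (a * b) f = lderiv a f + (lderiv b (lderiv a f) + lderiv b f) := by
  funext g; simp [lderiv, mul_assoc]; ring

lemma lderiv_inv (a : G) (f : G → ℂ) :
    lderiv a⁻¹ f = -(lderiv a f) - lderiv a⁻¹ (lderiv a f) := by
  funext g; simp [lderiv, mul_assoc]; ring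

lemma lderiv_commutator (u p : G) (f : G → ℂ) :
    lderiv ⁅u, p⁆ f =
      fun g => (lderiv p (lderiv u f) - lderiv u (lderiv p f)) ((p * u)⁻¹ * g) := by
  funext g
  simp [lderiv, commutatorElement_def, mul_assoc, mul_inv_rev, mul_inv_cancel_left,
    inv_mul_cancel_left]
  ring

/-- The subgroup of elements whose derivative drops the degree by `j + 1`. -/
def S (j : ℕ) : Subgroup G where
  carrier := {h : G | ∀ (m : ℕ) (f : G → ℂ), Q (m + j + 1) f → Q m (lderiv h f)}
  one_mem' := by
    intro m f _
    rw [lderiv_one]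
    exact Q_zero m
  mul_mem' := by
    intro a b ha hb m f hf
    rw [lderiv_mul]
    exact Q_add (ha m f hf) (Q_add (Q_lderiv (ha m f hf) b) (hb m f hf))
  inv_mem' := by
    intro a ha m f hf
    rw [lderiv_inv]
    exact Q_sub (Q_neg (ha m f hf)) (Q_lderiv (ha m f hf) a⁻¹)

lemma lcs_le (j : ℕ) : (⊤ : Subgroup G).lowerCentralSeries j ≤ S j := by
  induction j with
  | zero =>
    intro h _ m f hf
    exact Q_lderiv_of_succ hf h
  | succ j ih =>
    rw [Subgroup.lowerCentralSeries_succ]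
    refine Subgroup.commutator_le.mpr ?_
    intro p hp u _
    have hpS := ih hp
    intro m f hf
    have hf' : Q (m + j + 2) f := hf
    rw [lderiv_commutator]
    apply Q_transl
    apply Q_sub
    · have hf'' : Q (m + 1 + j + 1) f := by
        have : m + 1 + j + 1 = m + j + 2 := by ring
        rw [this]; exact hf'
      exact Q_lderiv_of_succ (hpS (m + 1) f hf'') u
    · exact hpS m (lderiv u f) (Q_lderiv_of_succ hf' u)

end PolyAux

/-- If `f ∈ P^k(G)` then `f` factors through `G/G_{k+1}`: every element of `G_{k+1}`
(which is `lowerCentralSeries G k` in Mathlib's indexing, since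
`lowerCentralSeries G 0 = G = G_1`) acts trivially on `f` from the left. -/
theorem isPolyOfDeg_factors_through {G : Type*} [Group G] {k : ℕ} {f : G → ℂ}
    (hf : IsPolyOfDeg k f) :
    ∀ n ∈ (⊤ : Subgroup G).lowerCentralSeries k, ∀ g : G, f (n * g) = f g := by
  intro n hn g
  have hQ : PolyAux.Q (0 + k + 1) f := by
    have : 0 + k + 1 = k + 1 := by ring
    rw [this]; exact hf
  have h0 : PolyAux.Q 0 (lderiv n f) := PolyAux.lcs_le k hn 0 f hQ
  have := congrFun (h0 [] rfl) g
  simp only [List.foldr, lderiv, Pi.zero_apply] at this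
  exact sub_eq_zero.mp this
end

section
/- Let G be a group, let f ∈ P^k(G), and define φ_f : G^k → ℂ by φ_f(x_1,…,x_k) = ∂_{x_1}⋯∂_{x_k} f(1). Then φ_f is a group homomorphism into (ℂ, +) in each variable separately. -/
lemma lderiv_add {G : Type*} [Group G] (u : G) (f g : G → ℂ) :
    lderiv u (f + g) = lderiv u f + lderiv u g := by
  funext x; simp [lderiv]; ring

lemma foldr_lderiv_add {G : Type*} [Group G] (l : List G) (f g : G → ℂ) :
    l.foldr lderiv (f + g) = l.foldr lderiv f + l.foldr lderiv g := by
  induction l with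
  | nil => rfl
  | cons a t ih => simp [List.foldr_cons, ih, lderiv_add]

lemma lderiv_mul {G : Type*} [Group G] (u v : G) (f : G → ℂ) :
    lderiv (u * v) f = lderiv u f + lderiv v f + lderiv v (lderiv u f) := by
  funext g; simp [lderiv, mul_assoc]; ring

lemma ofFn_update_eq {G : Type*} {k : ℕ} (x : Fin k → G) (i : Fin k) (w : G) :
    List.ofFn (Function.update x i w) =
      (List.ofFn x).take i ++ w :: (List.ofFn x).drop (i + 1) := by
  rw [← List.set_eq_take_cons_drop w (by simp [i.isLt])]
  apply List.ext_getElem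
  · simp
  · intro n h1 h2
    simp only [List.getElem_ofFn, List.getElem_set, List.getElem_ofFn]
    rcases eq_or_ne (i : ℕ) n with h | h
    · simp [h, Function.update]
      intro hne; exact absurd (Fin.ext h.symm) (by simpa using hne)
    · rw [if_neg h]
      simp only [List.length_ofFn] at h1
      exact Function.update_of_ne (fun hh => h (by rw [← hh])) _ _

/-- For `f ∈ P^k(G)`, the map `φ_f (x_1,…,x_k) = ∂_{x_1} ⋯ ∂_{x_k} f (1)` is additive
(a homomorphism into `(ℂ,+)`) in each variable separately. -/
theorem phi_multilinear {G : Type*} [Group G] {k : ℕ} {f : G → ℂ}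
    (hf : IsPolyOfDeg k f) (x : Fin k → G) (i : Fin k) (u v : G) :
    ((List.ofFn (Function.update x i (u * v))).foldr lderiv f) 1 =
      ((List.ofFn (Function.update x i u)).foldr lderiv f) 1 +
        ((List.ofFn (Function.update x i v)).foldr lderiv f) 1 := by
  rw [ofFn_update_eq, ofFn_update_eq, ofFn_update_eq]
  set l1 := (List.ofFn x).take i with hl1
  set l2 := (List.ofFn x).drop (i + 1) with hl2
  set g := l2.foldr lderiv f with hg
  have hfold : ∀ w : G, (l1 ++ w :: l2).foldr lderiv f = l1.foldr lderiv (lderiv w g) := by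
    intro w; rw [List.foldr_append]; rfl
  rw [hfold, hfold, hfold, lderiv_mul, foldr_lderiv_add, foldr_lderiv_add]
  have hz : l1.foldr lderiv (lderiv v (lderiv u g)) = 0 := by
    have : (l1 ++ v :: u :: l2).foldr lderiv f = 0 := by
      apply hf
      have hik : (i : ℕ) < k := i.isLt
      simp [hl1, hl2]
      omega
    rw [List.foldr_append] at this
    exact this
  rw [hz]
  simp
end
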